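/- arXiv:1705.06517 — 3 statements merged into one kernel-verified Lean document; each statement's English description precedes it below -/
import Mathlib

section
/- Every n×n matrix with non-negative integer entries all of whose row sums and column sums equal 2 is the sum of two n×n permutation matrices. -/
/-!
Hall's marriage theorem gives, for a non-negative integer matrix whose row and column sums all
equal `k > 0`, a permutation inside its support. Subtracting that permutation matrix lowers every
line sum by one, so induction on `k` writes the matrix as a sum of `k` permutation matrices.
-/

/-- The equivalence `Fin n × Fin 2 ≃ Fin (2*n)`, `(a, b) ↦ 2a + b`. -/
def pairFinEquiv (n : ℕ) : Fin n × Fin 2 ≃ Fin (2 * n) where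
  toFun p := ⟨2 * p.1.1 + p.2.1, by have h1 := p.1.2; have h2 := p.2.2; omega⟩
  invFun i := (⟨i.1 / 2, by have := i.2; omega⟩, ⟨i.1 % 2, by omega⟩)
  left_inv := by
    rintro ⟨⟨a, ha⟩, ⟨b, hb⟩⟩
    simp only [Prod.mk.injEq]
    constructor <;> apply Fin.ext <;> simp <;> omega
  right_inv := by
    rintro ⟨i, hi⟩
    apply Fin.ext
    simp
    omega

/-- The doubling map `w ↦ w̃`, sending a permutation of `{0, …, n-1}` to the permutation of
`{0, …, 2n-1}` with `w̃(2i) = 2w(i)` and `w̃(2i+1) = 2w(i)+1` (the zero-based version of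
`w̃(2i) = 2w(i)`, `w̃(2i-1) = 2w(i)-1`). -/
def double {n : ℕ} (w : Equiv.Perm (Fin n)) : Equiv.Perm (Fin (2 * n)) :=
  (pairFinEquiv n).permCongr (Equiv.prodCongr w (Equiv.refl (Fin 2)))

/-- The number of inversions of a permutation, i.e. its Coxeter length. -/
noncomputable def invLength {n : ℕ} (u : Equiv.Perm (Fin n)) : ℕ :=
  Set.ncard { p : Fin n × Fin n | p.1 < p.2 ∧ u p.2 < u p.1 }

/-- Bruhat order on the symmetric group: the reflexive-transitive closure of the relation
`a → a * t` where `t` is a transposition and `ℓ(a * t) > ℓ(a)`. -/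
def BruhatLE {n : ℕ} (x w : Equiv.Perm (Fin n)) : Prop :=
  Relation.ReflTransGen
    (fun a b => (∃ i j : Fin n, b = a * Equiv.swap i j) ∧ invLength a < invLength b) x w

/-- The subgroup `H` of `S_{2n}` of permutations preserving each pair `{2i, 2i+1}`. -/
def pairSubgroup (n : ℕ) : Subgroup (Equiv.Perm (Fin (2 * n))) where
  carrier := { u | ∀ i, (u i).1 / 2 = i.1 / 2 }
  one_mem' := by intro i; rfl
  mul_mem' := by
    intro a b ha hb i
    rw [Equiv.Perm.mul_apply, ha, hb]
  inv_mem' := by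
    intro a ha i
    have h := ha (a⁻¹ i)
    rw [show a (a⁻¹ i) = i from a.apply_symm_apply i] at h
    omega

/-- The subgroup `K` of `S_{2n}` of parity-preserving permutations. -/
def paritySubgroup (n : ℕ) : Subgroup (Equiv.Perm (Fin (2 * n))) where
  carrier := { u | ∀ i, (u i).1 % 2 = i.1 % 2 }
  one_mem' := by intro i; rfl
  mul_mem' := by
    intro a b ha hb i
    rw [Equiv.Perm.mul_apply, ha, hb]
  inv_mem' := by
    intro a ha i
    have h := ha (a⁻¹ i)
    rw [show a (a⁻¹ i) = i from a.apply_symm_apply i] at h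
    omega

/-- A permutation of `{0,…,2n-1}` is bi-`H`-reduced if it is increasing on each pair
`{2i, 2i+1}` and so is its inverse. -/
def BiReduced {n : ℕ} (v : Equiv.Perm (Fin (2 * n))) : Prop :=
  ∀ i : Fin n,
    v ⟨2 * i.1, by have := i.2; omega⟩ < v ⟨2 * i.1 + 1, by have := i.2; omega⟩ ∧
    v⁻¹ ⟨2 * i.1, by have := i.2; omega⟩ < v⁻¹ ⟨2 * i.1 + 1, by have := i.2; omega⟩

/-- Membership of `v` in the double coset `H x H` of `H = pairSubgroup n`. -/
def InPairDoubleCoset {n : ℕ} (x v : Equiv.Perm (Fin (2 * n))) : Prop :=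
  ∃ h₁ ∈ pairSubgroup n, ∃ h₂ ∈ pairSubgroup n, v = h₁ * x * h₂

/-- The matrix attached to a double coset `HuH`: the `(i,j)` entry is
`#({2i, 2i+1} ∩ u({2j, 2j+1}))`. -/
noncomputable def cosetMatrix {n : ℕ} (u : Equiv.Perm (Fin (2 * n))) :
    Matrix (Fin n) (Fin n) ℕ :=
  fun i j => Set.ncard { k : Fin (2 * n) | k.1 / 2 = j.1 ∧ (u k).1 / 2 = i.1 }

/-- The simple reflection `s_j = (j, j+1)` of `S_n` (zero-based). -/
def sRefl {n : ℕ} (j : {j : ℕ // j + 1 < n}) : Equiv.Perm (Fin n) :=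
  Equiv.swap ⟨j.1, Nat.lt_of_succ_lt j.2⟩ ⟨j.1 + 1, j.2⟩

/-- A Boolean permutation: a product of distinct simple reflections. -/
def BooleanPerm {n : ℕ} (w : Equiv.Perm (Fin n)) : Prop :=
  ∃ js : List {j : ℕ // j + 1 < n}, (js.map Subtype.val).Nodup ∧ w = (js.map sRefl).prod

/-- `w` avoids the pattern `(321)`. -/
def Avoids321 {n : ℕ} (w : Equiv.Perm (Fin n)) : Prop :=
  ¬ ∃ i j k : Fin n, i < j ∧ j < k ∧ w k < w j ∧ w j < w i

/-- `w` avoids the pattern `(3412)`. -/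
def Avoids3412 {n : ℕ} (w : Equiv.Perm (Fin n)) : Prop :=
  ¬ ∃ i j k l : Fin n, i < j ∧ j < k ∧ k < l ∧ w k < w l ∧ w l < w i ∧ w i < w j

/-- `w` avoids the pattern `(4231)`. -/
def Avoids4231 {n : ℕ} (w : Equiv.Perm (Fin n)) : Prop :=
  ¬ ∃ i j k l : Fin n, i < j ∧ j < k ∧ k < l ∧ w l < w j ∧ w j < w k ∧ w k < w i


open Finset

namespace Matrix

variable {n : Type*} [Fintype n] [DecidableEq n]

lemma exists_perm_forall_ne_zero_of_sums_eq {k : ℕ} (hk : k ≠ 0) {A : Matrix n n ℕ}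
    (hrow : ∀ i, ∑ j, A i j = k) (hcol : ∀ j, ∑ i, A i j = k) :
    ∃ σ : Equiv.Perm n, ∀ i, A i (σ i) ≠ 0 := by
  let support (i : n) : Finset n := {j | A i j ≠ 0}
  have hall (s : Finset n) : #s ≤ #(s.biUnion support) := by
    refine Nat.le_of_mul_le_mul_left ?_ (Nat.pos_of_ne_zero hk)
    calc k * #s = ∑ i ∈ s, ∑ j ∈ s.biUnion support, A i j := by
          rw [mul_comm, ← smul_eq_mul, ← sum_const]
          refine sum_congr rfl fun i hi => ?_
          rw [← hrow i]
          refine (sum_subset (subset_univ _) fun j _ hj => ?_).symm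
          by_contra hij
          exact hj (mem_biUnion.mpr ⟨i, hi, by simpa [support] using hij⟩)
      _ ≤ ∑ i, ∑ j ∈ s.biUnion support, A i j :=
          sum_le_sum_of_subset_of_nonneg (subset_univ s) fun _ _ _ => Nat.zero_le _
      _ = ∑ j ∈ s.biUnion support, ∑ i, A i j := Finset.sum_comm
      _ = k * #(s.biUnion support) := by
          rw [sum_congr rfl fun j _ => hcol j, sum_const, smul_eq_mul, mul_comm]
  obtain ⟨f, hf, hfA⟩ := (all_card_le_biUnion_card_iff_exists_injective support).mp hall
  exact ⟨Equiv.ofBijective f (Finite.injective_iff_bijective.mp hf),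
    fun i => by simpa [support] using hfA i⟩

omit [Fintype n] in
lemma permMatrix_apply_le {A : Matrix n n ℕ} {σ : Equiv.Perm n} (hσ : ∀ i, A i (σ i) ≠ 0)
    (i j : n) : σ.permMatrix ℕ i j ≤ A i j := by
  by_cases h : σ i = j
  · subst h
    simpa [Equiv.toPEquiv_apply, Nat.one_le_iff_ne_zero] using hσ i
  · simp [Equiv.toPEquiv_apply, h]

lemma sum_permMatrix_row (σ : Equiv.Perm n) (i : n) : ∑ j, σ.permMatrix ℕ i j = 1 :=
  sum_row_of_mem_rowStochastic permMatrix_mem_rowStochastic i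

lemma sum_permMatrix_col (σ : Equiv.Perm n) (j : n) : ∑ i, σ.permMatrix ℕ i j = 1 :=
  sum_col_of_mem_colStochastic permMatrix_mem_colStochastic j

theorem exists_multiset_perm_sum_permMatrix_eq {k : ℕ} {A : Matrix n n ℕ}
    (hrow : ∀ i, ∑ j, A i j = k) (hcol : ∀ j, ∑ i, A i j = k) :
    ∃ s : Multiset (Equiv.Perm n), Multiset.card s = k ∧
      (s.map (·.permMatrix ℕ)).sum = A := by
  induction k generalizing A with
  | zero =>
    refine ⟨0, rfl, funext fun i => funext fun j => ?_⟩
    exact ((sum_eq_zero_iff.mp (hrow i)) j (mem_univ j)).symm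
  | succ k ih =>
    obtain ⟨σ, hσ⟩ := exists_perm_forall_ne_zero_of_sums_eq k.succ_ne_zero hrow hcol
    have hle := permMatrix_apply_le hσ
    obtain ⟨s, hcard, hsum⟩ := ih (A := A - σ.permMatrix ℕ)
      (fun i => by
        simp only [sub_apply, sum_tsub_distrib _ fun j _ => hle i j, hrow, sum_permMatrix_row]
        rfl)
      (fun j => by
        simp only [sub_apply, sum_tsub_distrib _ fun i _ => hle i j, hcol, sum_permMatrix_col]
        rfl)
    refine ⟨σ ::ₘ s, by simp [hcard], ?_⟩
    rw [Multiset.map_cons, Multiset.sum_cons, hsum]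
    exact funext fun i => funext fun j => add_tsub_cancel_of_le (hle i j)

end Matrix

/-- Every `n × n` matrix with non-negative integer entries, all of whose row sums and column
sums equal `2`, is the sum of two permutation matrices. -/
theorem stmt8 (n : ℕ) (A : Matrix (Fin n) (Fin n) ℕ)
    (hrow : ∀ i, ∑ j, A i j = 2) (hcol : ∀ j, ∑ i, A i j = 2) :
    ∃ σ τ : Equiv.Perm (Fin n), ∀ i j,
      A i j = (if σ j = i then 1 else 0) + (if τ j = i then 1 else 0) := by
  -- `σ.permMatrix` has its ones at `(i, σ i)`, whereas the claim puts them at `(σ j, j)`.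
  obtain ⟨s, hcard, hsum⟩ := Matrix.exists_multiset_perm_sum_permMatrix_eq (A := A.transpose)
    hcol hrow
  obtain ⟨σ, τ, rfl⟩ := Multiset.card_eq_two.mp hcard
  refine ⟨σ, τ, fun i j => ?_⟩
  have hij := congr_fun (congr_fun hsum j) i
  simp only [Multiset.insert_eq_cons, Multiset.map_cons, Multiset.map_singleton,
    Multiset.sum_cons, Multiset.sum_singleton] at hij
  simpa [Equiv.toPEquiv_apply] using hij.symm
end

section
/- Let u ∈ K ∩ HxH for some x ∈ S_{2n}, and let r be the number of non-trivial cycles (cycles of length at least 2) of the permutation u_even⁻¹ · u_odd ∈ S_n. Then the cardinality of K ∩ HxH equals 2^r. -/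
/-!
Write `c = b⁻¹ * a`. An element `v` of `K ∩ HuH` sends each pair `{2j, 2j+1}` either as `u` does,
to `(2a(j), 2b(j)+1)`, or with the roles of `a` and `b` exchanged. The set `T` of pairs on which
`v` differs from `u` lies in the support of `c` and is `c`-stable. Conversely, for such a `T` we
have `a(T) = b(T)`, so flipping the pairs of `T` before `u` and those of `a(T)` after it gives an
element of `K ∩ HuH`. Hence `K ∩ HuH` is in bijection with the `c`-stable subsets of the support
of `c`, that is, with the sets of non-trivial cycles of `c`.
-/

open Equiv

namespace Equiv.Perm

variable {α : Type*} {c : Perm α} {T : Finset α}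

section Finite

variable [Finite α]

lemma mem_of_sameCycle_of_mapsTo (hT : ∀ x ∈ T, c x ∈ T) {x y : α} (hxy : c.SameCycle x y)
    (hx : x ∈ T) : y ∈ T := by
  have hpow : ∀ k : ℕ, (c ^ k) x ∈ T := by
    intro k
    induction k with
    | zero => exact hx
    | succ k ih => rw [pow_succ', mul_apply]; exact hT _ ih
  obtain ⟨k, -, rfl⟩ := hxy.exists_pow_eq'
  exact hpow k

end Finite

variable [Fintype α] [DecidableEq α]

def stableSubsetsOfSupport (c : Perm α) : Finset (Finset α) :=
  c.support.powerset.filter fun T => ∀ x ∈ T, c x ∈ T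

lemma mem_stableSubsetsOfSupport :
    T ∈ c.stableSubsetsOfSupport ↔ T ⊆ c.support ∧ ∀ x ∈ T, c x ∈ T := by
  rw [stableSubsetsOfSupport, Finset.mem_filter, Finset.mem_powerset]

lemma mem_of_support_subset_biUnion {F : Finset (Perm α)} (hF : F ⊆ c.cycleFactorsFinset)
    {g : Perm α} (hg : g ∈ c.cycleFactorsFinset) (h : g.support ⊆ F.biUnion support) :
    g ∈ F := by
  obtain ⟨x, hx⟩ := (mem_cycleFactorsFinset_iff.1 hg).1.nonempty_support
  obtain ⟨g', hg', hxg'⟩ := Finset.mem_biUnion.1 (h hx)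
  rwa [cycle_is_cycleOf hx hg, ← cycle_is_cycleOf hxg' (hF hg')]

lemma injOn_biUnion_support :
    Set.InjOn (fun F : Finset (Perm α) => F.biUnion support) c.cycleFactorsFinset.powerset := by
  intro F hF G hG (hFG : F.biUnion support = G.biUnion support)
  simp only [Finset.coe_powerset, Set.mem_preimage, Set.mem_powerset_iff,
    Finset.coe_subset] at hF hG
  ext g
  exact ⟨fun hg => mem_of_support_subset_biUnion hG (hF hg)
      (by rw [← hFG]; exact Finset.subset_biUnion_of_mem support hg),
    fun hg => mem_of_support_subset_biUnion hF (hG hg)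
      (by rw [hFG]; exact Finset.subset_biUnion_of_mem support hg)⟩

lemma image_biUnion_support_powerset :
    c.cycleFactorsFinset.powerset.image (fun F => F.biUnion support) =
      c.stableSubsetsOfSupport := by
  ext T
  simp only [Finset.mem_image, Finset.mem_powerset, mem_stableSubsetsOfSupport]
  constructor
  · rintro ⟨F, hF, rfl⟩
    refine ⟨Finset.biUnion_subset.2 fun g hg => mem_cycleFactorsFinset_support_le (hF hg),
      fun x hx => ?_⟩
    obtain ⟨g, hg, hxg⟩ := Finset.mem_biUnion.1 hx
    rw [← (mem_cycleFactorsFinset_iff.1 (hF hg)).2 x hxg]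
    exact Finset.mem_biUnion.2 ⟨g, hg, apply_mem_support.2 hxg⟩
  · rintro ⟨hsupp, hT⟩
    refine ⟨c.cycleFactorsFinset.filter (·.support ⊆ T), Finset.filter_subset _ _, ?_⟩
    ext x
    simp only [Finset.mem_biUnion, Finset.mem_filter]
    constructor
    · rintro ⟨g, ⟨-, hgT⟩, hx⟩
      exact hgT hx
    · intro hx
      refine ⟨c.cycleOf x, ⟨cycleOf_mem_cycleFactorsFinset_iff.2 (hsupp hx), fun y hy => ?_⟩,
        mem_support_cycleOf_iff.2 ⟨SameCycle.refl _ _, hsupp hx⟩⟩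
      exact mem_of_sameCycle_of_mapsTo hT (mem_support_cycleOf_iff.1 hy).1 hx

theorem card_stableSubsetsOfSupport (c : Perm α) :
    c.stableSubsetsOfSupport.card = 2 ^ Multiset.card c.cycleType := by
  rw [← image_biUnion_support_powerset, Finset.card_image_of_injOn injOn_biUnion_support,
    Finset.card_powerset, cycleType_def, Multiset.card_map]
  rfl

lemma mem_support_inv_mul {a b : Perm α} {x : α} : x ∈ (b⁻¹ * a).support ↔ a x ≠ b x := by
  rw [mem_support, mul_apply, Ne, Ne, inv_eq_iff_eq]

end Equiv.Perm

section Pairs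

variable {n : ℕ}

def pairLo (j : Fin n) : Fin (2 * n) := ⟨2 * j, by omega⟩

def pairHi (j : Fin n) : Fin (2 * n) := ⟨2 * j + 1, by omega⟩

@[simp] lemma val_pairLo (j : Fin n) : (pairLo j).1 = 2 * j := rfl

@[simp] lemma val_pairHi (j : Fin n) : (pairHi j).1 = 2 * j + 1 := rfl

@[simp] lemma pairLo_inj {i j : Fin n} : pairLo i = pairLo j ↔ i = j := by
  simp only [Fin.ext_iff, val_pairLo]; omega

@[simp] lemma pairHi_inj {i j : Fin n} : pairHi i = pairHi j ↔ i = j := by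
  simp only [Fin.ext_iff, val_pairHi]; omega

lemma pairLo_ne_pairHi (i j : Fin n) : pairLo i ≠ pairHi j := by
  simp only [ne_eq, Fin.ext_iff, val_pairLo, val_pairHi]; omega

lemma exists_eq_pairLo_or_pairHi (k : Fin (2 * n)) : ∃ j, k = pairLo j ∨ k = pairHi j :=
  ⟨⟨k / 2, by omega⟩, by simp only [Fin.ext_iff, val_pairLo, val_pairHi]; omega⟩

lemma Equiv.Perm.ext_pair {v w : Perm (Fin (2 * n))} (hlo : ∀ j, v (pairLo j) = w (pairLo j))
    (hhi : ∀ j, v (pairHi j) = w (pairHi j)) : v = w := by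
  ext1 k
  obtain ⟨j, rfl | rfl⟩ := exists_eq_pairLo_or_pairHi k
  exacts [hlo j, hhi j]

lemma mem_paritySubgroup_of_pair {v : Perm (Fin (2 * n))}
    (hlo : ∀ j, ∃ i, v (pairLo j) = pairLo i) (hhi : ∀ j, ∃ i, v (pairHi j) = pairHi i) :
    v ∈ paritySubgroup n := by
  intro k
  obtain ⟨j, rfl | rfl⟩ := exists_eq_pairLo_or_pairHi k
  · obtain ⟨i, hi⟩ := hlo j
    simp [hi]
  · obtain ⟨i, hi⟩ := hhi j
    simp [hi]

lemma apply_pair_of_mem_pairSubgroup {h : Perm (Fin (2 * n))} (hh : h ∈ pairSubgroup n)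
    (j : Fin n) :
    (h (pairLo j) = pairLo j ∧ h (pairHi j) = pairHi j) ∨
      (h (pairLo j) = pairHi j ∧ h (pairHi j) = pairLo j) := by
  have hlo := hh (pairLo j)
  have hhi := hh (pairHi j)
  have hne := h.injective.ne (pairLo_ne_pairHi j j)
  simp only [ne_eq, Fin.ext_iff, val_pairLo, val_pairHi] at hlo hhi hne ⊢
  omega

def flipOn (T : Finset (Fin n)) : Perm (Fin (2 * n)) :=
  (pairFinEquiv n).permCongr
    (Equiv.prodShear (Equiv.refl (Fin n)) fun j => if j ∈ T then swap 0 1 else Equiv.refl _)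

lemma pairFinEquiv_apply_zero (j : Fin n) : pairFinEquiv n (j, 0) = pairLo j := Fin.ext rfl

lemma pairFinEquiv_apply_one (j : Fin n) : pairFinEquiv n (j, 1) = pairHi j := rfl

lemma flipOn_pairLo (T : Finset (Fin n)) (j : Fin n) :
    flipOn T (pairLo j) = if j ∈ T then pairHi j else pairLo j := by
  rw [← pairFinEquiv_apply_zero]
  split_ifs with hj <;> simp [flipOn, hj, Equiv.prodShear, pairFinEquiv_apply_one]

lemma flipOn_pairHi (T : Finset (Fin n)) (j : Fin n) :
    flipOn T (pairHi j) = if j ∈ T then pairLo j else pairHi j := by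
  rw [← pairFinEquiv_apply_one]
  split_ifs with hj <;> simp [flipOn, hj, Equiv.prodShear, pairFinEquiv_apply_zero]

lemma flipOn_mem_pairSubgroup (T : Finset (Fin n)) : flipOn T ∈ pairSubgroup n := by
  intro k
  obtain ⟨j, rfl | rfl⟩ := exists_eq_pairLo_or_pairHi k <;>
    simp only [flipOn_pairLo, flipOn_pairHi] <;> split_ifs <;>
    simp only [val_pairLo, val_pairHi] <;> omega

end Pairs

section Twist

variable {n : ℕ} {a b : Perm (Fin n)} {u v w : Perm (Fin (2 * n))} {T : Finset (Fin n)}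

def IsTwist (a b : Perm (Fin n)) (T : Finset (Fin n)) (v : Perm (Fin (2 * n))) : Prop :=
  ∀ j, v (pairLo j) = pairLo (if j ∈ T then b j else a j) ∧
    v (pairHi j) = pairHi (if j ∈ T then a j else b j)

namespace IsTwist

lemma eq (hv : IsTwist a b T v) (hw : IsTwist a b T w) : v = w :=
  Perm.ext_pair (fun j => (hv j).1.trans (hw j).1.symm) (fun j => (hv j).2.trans (hw j).2.symm)

lemma mem_paritySubgroup (hv : IsTwist a b T v) : v ∈ paritySubgroup n :=
  mem_paritySubgroup_of_pair (fun j => ⟨_, (hv j).1⟩) (fun j => ⟨_, (hv j).2⟩)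

lemma mapsTo (hv : IsTwist a b T v) : ∀ j ∈ T, (b⁻¹ * a) j ∈ T := by
  intro j hj
  by_contra hk
  have hvhi : v (pairHi ((b⁻¹ * a) j)) = v (pairHi j) := by
    rw [(hv _).2, (hv j).2, if_neg hk, if_pos hj]
    simp
  rw [pairHi_inj.1 (v.injective hvhi)] at hk
  exact hk hj

end IsTwist

variable (a) in
def twist (u : Perm (Fin (2 * n))) (T : Finset (Fin n)) : Perm (Fin (2 * n)) :=
  flipOn (T.map a.toEmbedding) * u * flipOn T

lemma twist_mem_doubleCoset : InPairDoubleCoset u (twist a u T) :=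
  ⟨_, flipOn_mem_pairSubgroup _, _, flipOn_mem_pairSubgroup _, rfl⟩

lemma isTwist_twist (hu0 : ∀ j, u (pairLo j) = pairLo (a j))
    (hu1 : ∀ j, u (pairHi j) = pairHi (b j)) (hT : ∀ j ∈ T, (b⁻¹ * a) j ∈ T) :
    IsTwist a b T (twist a u T) := by
  have hTc : T.map (b⁻¹ * a).toEmbedding = T := Finset.map_eq_of_subset fun y hy => by
    obtain ⟨x, hx, rfl⟩ := Finset.mem_map.1 hy
    exact hT x hx
  have hab : T.map a.toEmbedding = T.map b.toEmbedding := by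
    conv_rhs => rw [← hTc, Finset.map_map]
    congr 1
    ext
    simp
  have ha : ∀ j, a j ∈ T.map a.toEmbedding ↔ j ∈ T := by simp
  have hb : ∀ j, b j ∈ T.map a.toEmbedding ↔ j ∈ T := by simp [hab]
  intro j
  by_cases hj : j ∈ T <;>
    simp only [twist, Perm.mul_apply, flipOn_pairLo, flipOn_pairHi, hj, hu0, hu1, ha, hb,
      if_true, if_false, and_self]

def twistSet (a : Perm (Fin n)) (v : Perm (Fin (2 * n))) : Finset (Fin n) :=
  {j | v (pairLo j) ≠ pairLo (a j)}

lemma IsTwist.twistSet_eq (hv : IsTwist a b T v) (hT : T ⊆ (b⁻¹ * a).support) :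
    twistSet a v = T := by
  ext j
  simp only [twistSet, Finset.mem_filter, Finset.mem_univ, true_and, (hv j).1]
  split_ifs with hj
  · simpa only [ne_eq, pairLo_inj, hj, iff_true] using (Perm.mem_support_inv_mul.1 (hT hj)).symm
  · simp [hj]

lemma apply_pair_of_mem_doubleCoset (hu0 : ∀ j, u (pairLo j) = pairLo (a j))
    (hu1 : ∀ j, u (pairHi j) = pairHi (b j)) (hvK : v ∈ paritySubgroup n)
    (hvC : InPairDoubleCoset u v) (j : Fin n) :
    (v (pairLo j) = pairLo (a j) ∧ v (pairHi j) = pairHi (b j)) ∨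
      (v (pairLo j) = pairLo (b j) ∧ v (pairHi j) = pairHi (a j)) := by
  obtain ⟨h₁, hh₁, h₂, hh₂, hv⟩ := hvC
  have hpair : ∀ k, (v k).1 / 2 = (u (h₂ k)).1 / 2 := fun k => by rw [hv]; exact hh₁ _
  have hlo := hpair (pairLo j)
  have hhi := hpair (pairHi j)
  have plo := hvK (pairLo j)
  have phi := hvK (pairHi j)
  rcases apply_pair_of_mem_pairSubgroup hh₂ j with ⟨h0, h1⟩ | ⟨h0, h1⟩ <;> [left; right] <;>
    simp only [h0, h1, hu0, hu1, Fin.ext_iff, val_pairLo, val_pairHi] at hlo hhi plo phi ⊢ <;>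
    omega

lemma isTwist_twistSet (hd : ∀ j, (v (pairLo j) = pairLo (a j) ∧ v (pairHi j) = pairHi (b j)) ∨
      (v (pairLo j) = pairLo (b j) ∧ v (pairHi j) = pairHi (a j))) :
    IsTwist a b (twistSet a v) v := by
  intro j
  rcases hd j with ⟨h0, h1⟩ | ⟨h0, h1⟩ <;> by_cases hab : b j = a j <;>
    simp [twistSet, h0, h1, hab]

lemma IsTwist.twistSet_subset_support (hv : IsTwist a b (twistSet a v) v) :
    twistSet a v ⊆ (b⁻¹ * a).support := by
  intro j hj
  have h := (hv j).1
  rw [if_pos hj] at h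
  simp only [twistSet, Finset.mem_filter, Finset.mem_univ, true_and, h, ne_eq, pairLo_inj] at hj
  exact Perm.mem_support_inv_mul.2 (Ne.symm hj)

end Twist

lemma InPairDoubleCoset.inPairDoubleCoset_iff {n : ℕ} {x u : Perm (Fin (2 * n))}
    (hx : InPairDoubleCoset x u) (v : Perm (Fin (2 * n))) :
    InPairDoubleCoset x v ↔ InPairDoubleCoset u v := by
  obtain ⟨h₁, hh₁, h₂, hh₂, rfl⟩ := hx
  constructor
  · rintro ⟨k₁, hk₁, k₂, hk₂, rfl⟩
    exact ⟨k₁ * h₁⁻¹, mul_mem hk₁ (inv_mem hh₁), h₂⁻¹ * k₂, mul_mem (inv_mem hh₂) hk₂, by group⟩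
  · rintro ⟨k₁, hk₁, k₂, hk₂, rfl⟩
    exact ⟨k₁ * h₁, mul_mem hk₁ hh₁, h₂ * k₂, mul_mem hh₂ hk₂, by group⟩

theorem ncard_paritySubgroup_inter_doubleCoset {n : ℕ} {a b : Perm (Fin n)}
    {u : Perm (Fin (2 * n))}
    (hu0 : ∀ j, u (pairLo j) = pairLo (a j)) (hu1 : ∀ j, u (pairHi j) = pairHi (b j)) :
    {v | v ∈ paritySubgroup n ∧ InPairDoubleCoset u v}.ncard
      = 2 ^ Multiset.card (b⁻¹ * a).cycleType := by
  have himage : {v | v ∈ paritySubgroup n ∧ InPairDoubleCoset u v}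
      = twist a u '' ↑(b⁻¹ * a).stableSubsetsOfSupport := by
    ext v
    simp only [Set.mem_ofPred_eq, Set.mem_image, Finset.mem_coe, Perm.mem_stableSubsetsOfSupport]
    constructor
    · rintro ⟨hvK, hvC⟩
      have hv := isTwist_twistSet (apply_pair_of_mem_doubleCoset hu0 hu1 hvK hvC)
      exact ⟨twistSet a v, ⟨hv.twistSet_subset_support, hv.mapsTo⟩,
        (isTwist_twist hu0 hu1 hv.mapsTo).eq hv⟩
    · rintro ⟨T, ⟨-, hT⟩, rfl⟩
      exact ⟨(isTwist_twist hu0 hu1 hT).mem_paritySubgroup, twist_mem_doubleCoset⟩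
  rw [himage, Set.InjOn.ncard_image, Set.ncard_coe_finset]
  · exact (b⁻¹ * a).card_stableSubsetsOfSupport
  intro T hT T' hT' h
  simp only [Finset.mem_coe, Perm.mem_stableSubsetsOfSupport] at hT hT'
  rw [← (isTwist_twist hu0 hu1 hT.2).twistSet_eq hT.1, h,
    (isTwist_twist hu0 hu1 hT'.2).twistSet_eq hT'.1]

/-- If `u ∈ K ∩ HxH` has odd part `a` and even part `b`, and `r` is the number of
non-trivial cycles of `b⁻¹ * a`, then `#(K ∩ HxH) = 2^r`. -/
theorem stmt13 (n : ℕ) (x u : Equiv.Perm (Fin (2 * n))) (a b : Equiv.Perm (Fin n))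
    (hx : InPairDoubleCoset x u)
    (hab : ∀ i : Fin n,
      u ⟨2 * i.1, by have := i.2; omega⟩
          = ⟨2 * (a i).1, by have := (a i).2; omega⟩ ∧
      u ⟨2 * i.1 + 1, by have := i.2; omega⟩
          = ⟨2 * (b i).1 + 1, by have := (b i).2; omega⟩)
 :
    Set.ncard {v : Equiv.Perm (Fin (2 * n)) | v ∈ paritySubgroup n ∧ InPairDoubleCoset x v}
      = 2 ^ Multiset.card (Equiv.Perm.cycleType (b⁻¹ * a)) := by
  simp only [hx.inPairDoubleCoset_iff]
  exact ncard_paritySubgroup_inter_doubleCoset (fun i => (hab i).1) (fun i => (hab i).2)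
end

section
/- Let w = s_{j_1}···s_{j_l} ∈ S_n be a Boolean permutation, with j_1,...,j_l distinct. Then the map x ↦ I_x = {i ∈ {1,...,l} : s_{j_i} ≤ x} is a bijection between the Bruhat interval {x ∈ S_n : x ≤ w} and the power set of {1,...,l}. In particular, the interval {x : x ≤ w} has exactly 2^{ℓ(w)} elements. -/
/-!
Write `w = s_{j_1} ⋯ s_{j_l}`. Going down one Bruhat step, `c ↦ c t` with `ℓ(c t) < ℓ(c)`,
deletes a letter from any word for `c` (strong exchange); this only needs that `ℓ(u t) < ℓ(u)`
exactly when the transposition `t = (p q)` swaps an inversion of `u`. Conversely, a product of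
distinct simple reflections is reduced, so deleting one letter of it is a Bruhat step down.
Hence `{x ≤ w}` is the set of subword products of `w`. A product of distinct simple reflections
avoiding `s_j` maps `{0, …, j}` to itself, so `s_j ≤ x` exactly when `s_j` is a letter of the
subword giving `x`: the index set `I_x` recovers the subword, and `ℓ(w) = l`.
-/

open Equiv
open scoped List

theorem List.Sublist.filter_mem_eq {α : Type*} [DecidableEq α] {l₁ l₂ : List α} (h : l₁ <+ l₂)
    (hl₂ : l₂.Nodup) : l₂.filter (· ∈ l₁) = l₁ := by
  have h₁ := h.filter (· ∈ l₁)
  rw [List.filter_eq_self.2 fun a ha => decide_eq_true ha] at h₁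
  refine (h₁.eq_of_length_le ((hl₂.filter _).subperm fun a ha => ?_).length_le).symm
  simpa using (List.mem_filter.1 ha).2

variable {n : ℕ}

def inversions (u : Perm (Fin n)) : Set (Fin n × Fin n) :=
  {p | p.1 < p.2 ∧ u p.2 < u p.1}

lemma invLength_eq_ncard (u : Perm (Fin n)) : invLength u = (inversions u).ncard := rfl

lemma invLength_one : invLength (1 : Perm (Fin n)) = 0 := by
  rw [invLength_eq_ncard, Set.ncard_eq_zero, Set.eq_empty_iff_forall_notMem]
  exact fun z hz => hz.1.asymm hz.2

lemma invLength_inv (u : Perm (Fin n)) : invLength u⁻¹ = invLength u := by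
  have key : ∀ v : Perm (Fin n), invLength v ≤ invLength v⁻¹ := fun v =>
    Set.ncard_le_ncard_of_injOn (fun z => (v z.2, v z.1))
      (fun z hz => ⟨by simpa using hz.2, by simpa using hz.1⟩)
      (fun z _ z' _ h => by simp_all [Prod.ext_iff])
  exact le_antisymm (by simpa using key u⁻¹) (key u)

lemma invLength_lt_mul_swap {u : Perm (Fin n)} {p q : Fin n} (hpq : p < q) (h : u p < u q) :
    invLength u < invLength (u * swap p q) := by
  -- `F` reroutes the inversions `(q, y)` and `(x, p)` of `u` that `swap p q` would destroy
  -- through `p`, resp. `q`, and fixes all other inversions.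
  let F : Fin n × Fin n → Fin n × Fin n := fun z =>
    if z.1 = q ∧ u p < u z.2 then (p, z.2) else if z.2 = p ∧ u z.1 < u q then (z.1, q) else z
  have hmaps : Set.MapsTo F (inversions u) (inversions (u * swap p q) \ {(p, q)}) := by
    rintro ⟨x, y⟩ ⟨hxy, hyx⟩
    simp only [F, inversions, Set.mem_sdiff, Set.mem_ofPred_eq, Set.mem_singleton_iff,
      Perm.mul_apply, swap_apply_def]
    grind [Equiv.apply_eq_iff_eq]
  have hinj : Set.InjOn F (inversions u) := by
    rintro ⟨x, y⟩ ⟨hxy, hyx⟩ ⟨x', y'⟩ ⟨hxy', hyx'⟩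
    grind [Equiv.apply_eq_iff_eq]
  calc invLength u ≤ (inversions (u * swap p q) \ {(p, q)}).ncard :=
        Set.ncard_le_ncard_of_injOn F hmaps hinj
    _ < _ := Set.ncard_sdiff_singleton_lt_of_mem ⟨hpq, by simpa⟩ (Set.toFinite _)

lemma invLength_mul_swap_lt_iff {u : Perm (Fin n)} {p q : Fin n} (hpq : p < q) :
    invLength (u * swap p q) < invLength u ↔ u q < u p := by
  constructor
  · intro h
    by_contra! hle
    exact h.not_gt (invLength_lt_mul_swap hpq (hle.lt_of_ne (by simpa using hpq.ne)))
  · intro h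
    simpa [mul_assoc] using invLength_lt_mul_swap (u := u * swap p q) hpq (by simpa using h)

variable {j : {j : ℕ // j + 1 < n}} {ms js : List {j : ℕ // j + 1 < n}}

lemma sRefl_apply_val (x : Fin n) :
    (sRefl j x : ℕ) = if (x : ℕ) = j.1 then j.1 + 1 else if (x : ℕ) = j.1 + 1 then j.1 else x := by
  unfold sRefl
  rw [swap_apply_def]
  split_ifs <;> simp_all [Fin.ext_iff]

lemma invLength_mul_sRefl_le (u : Perm (Fin n)) : invLength (u * sRefl j) ≤ invLength u + 1 := by
  have hsub : inversions (u * sRefl j) ⊆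
      insert (⟨j, by omega⟩, ⟨j + 1, j.2⟩) (Prod.map (sRefl j) (sRefl j) '' inversions u) := by
    rintro ⟨x, y⟩ ⟨hxy, hyx⟩
    change x < y at hxy
    by_cases hxy' : (x : ℕ) = j ∧ (y : ℕ) = j + 1
    · left
      simp [Prod.ext_iff, Fin.ext_iff, hxy']
    · right
      refine ⟨(sRefl j x, sRefl j y), ⟨?_, hyx⟩, by simp [sRefl]⟩
      rw [Fin.lt_def] at hxy ⊢
      rw [sRefl_apply_val, sRefl_apply_val]
      split_ifs <;> omega
  calc invLength (u * sRefl j) ≤ _ := Set.ncard_le_ncard hsub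
    _ ≤ _ := Set.ncard_insert_le _ _
    _ ≤ invLength u + 1 := by gcongr; exact Set.ncard_image_le (Set.toFinite _)

lemma invLength_sRefl_mul {v : Perm (Fin n)} (h : v⁻¹ ⟨j, by omega⟩ < v⁻¹ ⟨j + 1, j.2⟩) :
    invLength (sRefl j * v) = invLength v + 1 := by
  have hinv : invLength (sRefl j * v) = invLength (v⁻¹ * sRefl j) := by
    rw [← invLength_inv, mul_inv_rev, sRefl, swap_inv]
  rw [hinv, ← invLength_inv v]
  exact le_antisymm (invLength_mul_sRefl_le _)
    (invLength_lt_mul_swap (Fin.mk_lt_mk.2 j.1.lt_succ_self) h)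

lemma prod_sRefl_apply_val_le_iff {m : ℕ} (hm : ∀ a ∈ ms, a.1 ≠ m) (x : Fin n) :
    ((ms.map sRefl).prod x : ℕ) ≤ m ↔ (x : ℕ) ≤ m := by
  induction ms generalizing x with
  | nil => simp
  | cons a ms ih =>
    have ha := hm a List.mem_cons_self
    rw [List.map_cons, List.prod_cons, Perm.mul_apply, sRefl_apply_val,
      ← ih (fun b hb => hm b (List.mem_cons_of_mem a hb))]
    split_ifs <;> omega

lemma invLength_prod_sRefl (hms : ms.Nodup) : invLength (ms.map sRefl).prod = ms.length := by
  induction ms with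
  | nil => exact invLength_one
  | cons j ms ih =>
    obtain ⟨hj, hms⟩ := List.nodup_cons.1 hms
    have hne : ∀ a ∈ ms, a.1 ≠ j.1 := fun a ha h => hj (Subtype.ext h ▸ ha)
    rw [List.map_cons, List.prod_cons, invLength_sRefl_mul, ih hms, List.length_cons]
    have h₁ := (prod_sRefl_apply_val_le_iff hne ((ms.map sRefl).prod⁻¹ ⟨j, by omega⟩)).1
      (by simp)
    have h₂ := (prod_sRefl_apply_val_le_iff hne ((ms.map sRefl).prod⁻¹ ⟨j + 1, j.2⟩)).not.1
      (by simp)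
    exact Fin.lt_def.2 (by omega)

lemma exists_sublist_prod_eq_mul_swap {p q : Fin n} (hpq : p < q)
    (hlt : invLength ((ms.map sRefl).prod * swap p q) < invLength (ms.map sRefl).prod) :
    ∃ ms', ms' <+ ms ∧ (ms'.map sRefl).prod = (ms.map sRefl).prod * swap p q := by
  induction ms with
  | nil => simp [invLength_one] at hlt
  | cons j ms ih =>
    rw [List.map_cons, List.prod_cons] at hlt ⊢
    set v := (ms.map sRefl).prod
    by_cases hv : invLength (v * swap p q) < invLength v
    · obtain ⟨ms', hsub, heq⟩ := ih hv
      exact ⟨j :: ms', hsub.cons_cons j, by rw [List.map_cons, List.prod_cons, heq, mul_assoc]⟩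
    · -- `s_j` reverses the pair `v p < v q`, so it is `{v p, v q}` and `v * swap p q = s_j * v`
      have hvpq : v p < v q :=
        (not_lt.1 (mt (invLength_mul_swap_lt_iff hpq).2 hv)).lt_of_ne (by simpa using hpq.ne)
      rw [invLength_mul_swap_lt_iff hpq] at hlt
      have hval : (v p : ℕ) = j ∧ (v q : ℕ) = j + 1 := by
        rw [Fin.lt_def] at hvpq hlt
        rw [Perm.mul_apply, Perm.mul_apply, sRefl_apply_val, sRefl_apply_val] at hlt
        split_ifs at hlt <;> omega
      have hsj : sRefl j = swap (v p) (v q) :=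
        congrArg₂ swap (Fin.ext hval.1.symm) (Fin.ext hval.2.symm)
      refine ⟨ms, List.sublist_cons_self j ms, ?_⟩
      rw [hsj, swap_apply_apply, inv_mul_cancel_right, mul_swap_mul_self]

lemma exists_sublist_of_bruhatLE {x : Perm (Fin n)} (h : BruhatLE x (ms.map sRefl).prod) :
    ∃ ms', ms' <+ ms ∧ (ms'.map sRefl).prod = x := by
  refine Relation.ReflTransGen.head_induction_on h ⟨ms, List.Sublist.refl ms, rfl⟩ ?_
  rintro a _ ⟨⟨p, q, rfl⟩, hlt⟩ _ ⟨ms', hsub, hc⟩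
  have ha : a = (ms'.map sRefl).prod * swap p q := by rw [hc, mul_swap_mul_self]
  rw [← hc, ha] at hlt
  rcases lt_trichotomy p q with hpq | rfl | hpq
  · obtain ⟨ms'', hsub', heq⟩ := exists_sublist_prod_eq_mul_swap hpq hlt
    exact ⟨ms'', hsub'.trans hsub, heq.trans ha.symm⟩
  · exact absurd hlt (by simp [swap_self, ← Perm.one_def])
  · rw [swap_comm] at hlt ha
    obtain ⟨ms'', hsub', heq⟩ := exists_sublist_prod_eq_mul_swap hpq hlt
    exact ⟨ms'', hsub'.trans hsub, heq.trans ha.symm⟩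

lemma bruhatLE_prod_append_cons {u v : List {j : ℕ // j + 1 < n}} (h : (u ++ j :: v).Nodup) :
    BruhatLE ((u ++ v).map sRefl).prod ((u ++ j :: v).map sRefl).prod := by
  set w := (v.map sRefl).prod
  refine Relation.ReflTransGen.single ⟨⟨w⁻¹ ⟨j, by omega⟩, w⁻¹ ⟨j + 1, j.2⟩, ?_⟩, ?_⟩
  · rw [swap_apply_apply, inv_inv]
    simp [w, mul_assoc, sRefl]
  · rw [invLength_prod_sRefl h, invLength_prod_sRefl (h.sublist (by simp))]
    simp

lemma bruhatLE_prod_of_sublist (h : ms <+ js) (hjs : js.Nodup) :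
    BruhatLE (ms.map sRefl).prod (js.map sRefl).prod := by
  suffices key : ∀ u, (u ++ js).Nodup →
      BruhatLE ((u ++ ms).map sRefl).prod ((u ++ js).map sRefl).prod by
    simpa using key [] hjs
  clear hjs
  induction h with
  | slnil => exact fun _ _ => Relation.ReflTransGen.refl
  | cons a _ ih =>
    exact fun u hu => (ih u (hu.sublist (by simp))).trans (bruhatLE_prod_append_cons hu)
  | cons_cons a _ ih =>
    exact fun u hu => by simpa using ih (u ++ [a]) (by simpa using hu)

lemma sRefl_bruhatLE_prod_iff (hms : ms.Nodup) :
    BruhatLE (sRefl j) (ms.map sRefl).prod ↔ j ∈ ms := by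
  refine ⟨fun h => ?_, fun h => by
    simpa using bruhatLE_prod_of_sublist (List.singleton_sublist.2 h) hms⟩
  obtain ⟨ts, hts, heq⟩ := exists_sublist_of_bruhatLE h
  by_contra hj
  have hne : ∀ a ∈ ts, a.1 ≠ j.1 := fun a ha h => hj (Subtype.ext h ▸ hts.subset ha)
  have := (prod_sRefl_apply_val_le_iff hne ⟨j, by omega⟩).2 le_rfl
  rw [heq, sRefl_apply_val] at this
  simp at this

lemma eq_of_sRefl_bruhatLE_iff {x y : Perm (Fin n)} (hjs : js.Nodup)
    (hx : BruhatLE x (js.map sRefl).prod) (hy : BruhatLE y (js.map sRefl).prod)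
    (h : ∀ a ∈ js, BruhatLE (sRefl a) x ↔ BruhatLE (sRefl a) y) : x = y := by
  classical
  obtain ⟨ms, hms, rfl⟩ := exists_sublist_of_bruhatLE hx
  obtain ⟨ms', hms', rfl⟩ := exists_sublist_of_bruhatLE hy
  rw [← hms.filter_mem_eq hjs, ← hms'.filter_mem_eq hjs]
  congr 2
  refine List.filter_congr fun a ha => ?_
  rw [decide_eq_decide, ← sRefl_bruhatLE_prod_iff (hjs.sublist hms),
    ← sRefl_bruhatLE_prod_iff (hjs.sublist hms')]
  exact h a ha

lemma exists_bruhatLE_sRefl_bruhatLE_iff (hjs : js.Nodup) (s : Set {j : ℕ // j + 1 < n}) :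
    ∃ x, BruhatLE x (js.map sRefl).prod ∧ ∀ a ∈ js, BruhatLE (sRefl a) x ↔ a ∈ s := by
  classical
  have hsub : js.filter (· ∈ s) <+ js := List.filter_sublist
  refine ⟨_, bruhatLE_prod_of_sublist hsub hjs, fun a ha => ?_⟩
  rw [sRefl_bruhatLE_prod_iff (hjs.sublist hsub)]
  simp [ha]

lemma bijective_sRefl_bruhatLE_indices (hjs : js.Nodup) :
    Function.Bijective fun x : {x : Perm (Fin n) // BruhatLE x (js.map sRefl).prod} =>
      ({i : Fin js.length | BruhatLE (sRefl (js.get i)) x.1} : Set (Fin js.length)) := by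
  constructor
  · rintro ⟨x, hx⟩ ⟨y, hy⟩ hxy
    refine Subtype.ext (eq_of_sRefl_bruhatLE_iff hjs hx hy fun a ha => ?_)
    obtain ⟨i, rfl⟩ := List.mem_iff_get.1 ha
    exact Set.ext_iff.1 hxy i
  · intro S
    obtain ⟨x, hx, hS⟩ := exists_bruhatLE_sRefl_bruhatLE_iff hjs (js.get '' S)
    refine ⟨⟨x, hx⟩, Set.ext fun i => ?_⟩
    change BruhatLE _ x ↔ i ∈ S
    rw [hS _ (List.get_mem js i), (List.nodup_iff_injective_get.1 hjs).mem_set_image]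

/-- For a Boolean permutation `w = s_{j_1} ⋯ s_{j_l}` with `j_1, …, j_l` distinct, the map
`x ↦ I_x = {i : s_{j_i} ≤ x}` is a bijection from `{x : x ≤ w}` onto the power set of
`{1, …, l}`; in particular `#{x : x ≤ w} = 2^{ℓ(w)}`. -/
theorem stmt16 (n : ℕ) (w : Equiv.Perm (Fin n)) (js : List {j : ℕ // j + 1 < n})
    (hnd : (js.map Subtype.val).Nodup) (hw : w = (js.map sRefl).prod) :
    Function.Bijective
      (fun x : {x : Equiv.Perm (Fin n) // BruhatLE x w} =>
        ({i : Fin js.length | BruhatLE (sRefl (js.get i)) x.1} : Set (Fin js.length))) ∧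
    Nat.card {x : Equiv.Perm (Fin n) // BruhatLE x w} = 2 ^ invLength w := by
  subst hw
  have hjs : js.Nodup := hnd.of_map
  have hbij := bijective_sRefl_bruhatLE_indices hjs
  refine ⟨hbij, ?_⟩
  rw [Nat.card_eq_of_bijective _ hbij, invLength_prod_sRefl hjs, Nat.card_eq_fintype_card,
    Fintype.card_set, Fintype.card_fin]
end
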